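/- Let K be a real symmetric positive definite 3×3 matrix. Then for every Q ∈ SO(3) one has tr(K (I₃ − Q)) ≥ 0, with equality if and only if Q = I₃. In particular, Q = I₃ is the unique global minimizer of Q ↦ tr(K (I₃ − Q)) over SO(3). -/

import Mathlib

open Matrix

private lemma trace_transpose_mul_self (A : Matrix (Fin 3) (Fin 3) ℝ) :
    0 ≤ (Aᵀ * A).trace ∧ ((Aᵀ * A).trace = 0 ↔ A = 0) := by
  have h : (Aᵀ * A).trace = ∑ i, ∑ j, A j i ^ 2 := by
    simp [Matrix.trace, Matrix.mul_apply, Matrix.diag, sq]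
  have hnn : ∀ i ∈ Finset.univ, (0:ℝ) ≤ ∑ j, A j i ^ 2 :=
    fun i _ => Finset.sum_nonneg fun j _ => sq_nonneg _
  refine ⟨by rw [h]; exact Finset.sum_nonneg hnn, ?_⟩
  rw [h]
  constructor
  · intro h0
    rw [Finset.sum_eq_zero_iff_of_nonneg hnn] at h0
    ext j i
    have := (Finset.sum_eq_zero_iff_of_nonneg (fun j _ => sq_nonneg (A j i))).mp
      (h0 i (Finset.mem_univ i)) j (Finset.mem_univ j)
    simpa using pow_eq_zero_iff (n := 2) (by norm_num) |>.mp this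
  · intro h0; simp [h0]

/-- If `K` is symmetric positive definite then `tr(K(I₃ − Q)) ≥ 0` for every
`Q ∈ SO(3)`, with equality iff `Q = I₃`; in particular `Q = I₃` is the unique global
minimizer of `Q ↦ tr(K(I₃ − Q))` over `SO(3)`. -/
theorem identity_is_global_min
    (K : Matrix (Fin 3) (Fin 3) ℝ) (hK : K.PosDef) :
    ∀ Q : Matrix (Fin 3) (Fin 3) ℝ, Qᵀ * Q = 1 → Q.det = 1 →
      0 ≤ (K * (1 - Q)).trace ∧ ((K * (1 - Q)).trace = 0 ↔ Q = 1) := by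
  intro Q hQ _hdet
  obtain ⟨L, hL⟩ : ∃ L : Matrix (Fin 3) (Fin 3) ℝ, K = Lᴴ * L := by
    open scoped MatrixOrder in
    exact CStarAlgebra.nonneg_iff_eq_star_mul_self.mp hK.posSemidef.nonneg
  rw [conjTranspose_eq_transpose_of_trivial] at hL
  set M : Matrix (Fin 3) (Fin 3) ℝ := 1 - Q with hM
  -- key algebraic identity : Mᵀ * M = M + Mᵀ
  have hMM : Mᵀ * M = M + Mᵀ := by
    have : Mᵀ * M = 1 - Q - Qᵀ + Qᵀ * Q := by
      simp only [hM, transpose_sub, transpose_one, sub_mul, mul_sub, Matrix.mul_one,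
        Matrix.one_mul]
      noncomm_ring
    rw [this, hQ, hM, transpose_sub, transpose_one]
    abel
  -- symmetry of K gives tr (K * Mᵀ) = tr (K * M)
  have hKsymm : Kᵀ = K := by
    have := hK.isHermitian
    rwa [IsHermitian, conjTranspose_eq_transpose_of_trivial] at this
  have htr : (K * Mᵀ).trace = (K * M).trace := by
    conv_lhs => rw [← trace_transpose, transpose_mul, transpose_transpose, hKsymm,
      trace_mul_comm]
  -- 2 * tr(K*M) = tr(Bᵀ * B) with B = L * Mᵀ
  have hkey : ((L * Mᵀ)ᵀ * (L * Mᵀ)).trace = 2 * (K * M).trace := by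
    have : (L * Mᵀ)ᵀ * (L * Mᵀ) = M * (K * Mᵀ) := by
      rw [transpose_mul, hL]
      noncomm_ring
    rw [this, trace_mul_comm, Matrix.mul_assoc, hMM, Matrix.mul_add, trace_add, htr, two_mul]
  obtain ⟨hnn, heq⟩ := trace_transpose_mul_self (L * Mᵀ)
  constructor
  · nlinarith [hnn, hkey]
  · constructor
    · intro h0
      have hB : L * Mᵀ = 0 := heq.mp (by rw [hkey, h0]; ring)
      have hKM : K * Mᵀ = 0 := by
        rw [hL, Matrix.mul_assoc, hB, Matrix.mul_zero]
      have hKunit : IsUnit K := by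
        rw [Matrix.isUnit_iff_isUnit_det]
        exact (hK.det_pos).ne'.isUnit
      have hMT : Mᵀ = 0 := by
        obtain ⟨Ki, hKi⟩ := hKunit.exists_left_inv
        calc Mᵀ = (Ki * K) * Mᵀ := by rw [hKi, Matrix.one_mul]
        _ = Ki * (K * Mᵀ) := by rw [Matrix.mul_assoc]
        _ = 0 := by rw [hKM, Matrix.mul_zero]
      have : M = 0 := by
        have := congrArg Matrix.transpose hMT
        simpa using this
      have : (1 : Matrix (Fin 3) (Fin 3) ℝ) - Q = 0 := this
      linear_combination (norm := (ext i j; simp)) -this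
    · intro h0
      simp [hM, h0]
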